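/- arXiv:2006.08040 — 2 statements merged into one kernel-verified Lean document; each statement's English description precedes it below -/
import Mathlib

section
/- Unbiasedness of the lifted linear-bandit estimator: Let H be a symmetric positive definite (d+1)×(d+1) real matrix, w⁺ ∈ R^{d+1}, ℓ ∈ R^d, and ℓ⁺ = (ℓ, 0) ∈ R^{d+1}. Let s be sampled uniformly at random from the unit sphere of the orthogonal complement of H^{−1/2}e_{d+1} in R^{d+1} (a d-dimensional subspace), and set w̃⁺ = w⁺ + H^{−1/2}s and ℓ̂⁺ = d·⟨w̃⁺, ℓ⁺⟩·H^{1/2}s. Then E[ℓ̂⁺_i] = ℓ_i for every coordinate i ∈ {1,…,d}; more precisely, E[ℓ̂⁺] = ℓ⁺ − (e_{d+1}e_{d+1}ᵀ H^{−1} ℓ⁺)/‖H^{−1/2}e_{d+1}‖₂². -/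
/-!
With `R = H^{1/2}` and `v = R⁻¹ e_{d+1}`, the estimator's `i`-th coordinate is
`d ⟨w⁺, ℓ⁺⟩ ⟨R_i, s⟩ + d ⟨R⁻¹ℓ⁺, s⟩ ⟨R_i, s⟩`, so only the first two moments of `s` matter.
The reflection fixing `v` and negating `v⊥` kills the first moment. Householder reflections
fixing `v` carry any vector of `v⊥` to any other one of the same length, so
`E[⟨a, s⟩ ⟨b, s⟩]` is a multiple of `⟨P a, P b⟩`, with `P` the orthogonal projection onto `v⊥`;
taking the trace (`E ‖s‖² = 1`, `tr P = d`) fixes the multiple to `1 / d`. Hence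
`E[ℓ̂⁺_i] = ⟨P R⁻¹ℓ⁺, P R_i⟩ = ℓ⁺_i - ⟨R⁻¹ℓ⁺, v⟩ ⟨R_i, v⟩ / ‖v‖²`, and `⟨R_i, v⟩ = (e_{d+1})_i`.
-/

open MeasureTheory Matrix Finset

/-- dot product on `ℝ^n`. -/
noncomputable def dotp {n : ℕ} (x y : Fin n → ℝ) : ℝ := ∑ i, x i * y i

section Householder

variable {ι : Type*} [Fintype ι] [DecidableEq ι]

-- `householder 0 = 1`, since `2 / 0 = 0`.
noncomputable def householder (w : ι → ℝ) : Matrix ι ι ℝ :=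
  1 - (2 / (w ⬝ᵥ w)) • vecMulVec w w

theorem householder_mulVec (w x : ι → ℝ) :
    householder w *ᵥ x = x - (2 * (w ⬝ᵥ x) / (w ⬝ᵥ w)) • w := by
  ext i
  simp only [householder, sub_mulVec, one_mulVec, smul_mulVec, vecMulVec_mulVec, op_smul_eq_smul,
    Pi.sub_apply, Pi.smul_apply, smul_eq_mul, sub_right_inj]
  ring

theorem householder_transpose (w : ι → ℝ) : (householder w)ᵀ = householder w := by
  simp [householder, transpose_vecMulVec]

theorem transpose_householder_mul_self (w : ι → ℝ) : (householder w)ᵀ * householder w = 1 := by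
  rw [householder_transpose, ext_iff_mulVec]
  intro x
  rw [← mulVec_mulVec, householder_mulVec, householder_mulVec, one_mulVec]
  rcases eq_or_ne (w ⬝ᵥ w) 0 with hw | hw
  · simp [hw]
  · simp only [dotProduct_sub, dotProduct_smul, smul_eq_mul]
    field_simp
    ext i
    simp only [Pi.sub_apply, Pi.smul_apply, smul_eq_mul]
    ring

theorem householder_mulVec_of_dotProduct_eq_zero {w x : ι → ℝ} (h : w ⬝ᵥ x = 0) :
    householder w *ᵥ x = x := by
  simp [householder_mulVec, h]

theorem householder_mulVec_self (w : ι → ℝ) : householder w *ᵥ w = -w := by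
  rcases eq_or_ne w 0 with rfl | hw
  · simp
  have hne : w ⬝ᵥ w ≠ 0 := by rwa [Ne, dotProduct_self_eq_zero]
  rw [householder_mulVec, mul_div_assoc, div_self hne, mul_one, two_smul, sub_add_cancel_left]

theorem householder_sub_mulVec {x y : ι → ℝ} (h : x ⬝ᵥ x = y ⬝ᵥ y) :
    householder (x - y) *ᵥ x = y := by
  rcases eq_or_ne x y with rfl | hxy
  · simp [householder_mulVec]
  have hsq : (x - y) ⬝ᵥ (x - y) = 2 * ((x - y) ⬝ᵥ x) := by
    simp only [sub_dotProduct, dotProduct_sub, dotProduct_comm y x, h]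
    ring
  have hne : (x - y) ⬝ᵥ (x - y) ≠ 0 := by
    rwa [Ne, dotProduct_self_eq_zero, sub_eq_zero]
  rw [householder_mulVec, ← hsq, div_self hne, one_smul, sub_sub_cancel]

end Householder

theorem dotProduct_sq_le_dotProduct_self_mul {ι : Type*} [Fintype ι] (a s : ι → ℝ) :
    (a ⬝ᵥ s) ^ 2 ≤ (a ⬝ᵥ a) * (s ⬝ᵥ s) := by
  simpa only [dotProduct, sq] using Finset.sum_mul_sq_le_sq_mul_sq Finset.univ a s

section UniformOnOrthSphere

variable {ι : Type*} [Fintype ι] [DecidableEq ι]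

-- Invariance under the stabiliser of `v` characterises the uniform distribution on the sphere.
structure IsUniformOnOrthSphere (μ : Measure (ι → ℝ)) (v : ι → ℝ) : Prop where
  ae_dotProduct_self : ∀ᵐ s ∂μ, s ⬝ᵥ s = 1
  ae_dotProduct_eq_zero : ∀ᵐ s ∂μ, s ⬝ᵥ v = 0
  map_mulVec : ∀ O : Matrix ι ι ℝ, Oᵀ * O = 1 → O *ᵥ v = v → μ.map (O *ᵥ ·) = μ

namespace IsUniformOnOrthSphere

variable {μ : Measure (ι → ℝ)} {v : ι → ℝ}

theorem integral_comp_mulVec (hμ : IsUniformOnOrthSphere μ v) {O : Matrix ι ι ℝ}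
    (hO : Oᵀ * O = 1) (hOv : O *ᵥ v = v) {f : (ι → ℝ) → ℝ} (hf : Continuous f) :
    ∫ s, f (O *ᵥ s) ∂μ = ∫ s, f s ∂μ := by
  conv_rhs => rw [← hμ.map_mulVec O hO hOv]
  exact (integral_map (continuous_const.matrix_mulVec continuous_id).aemeasurable
    hf.aestronglyMeasurable).symm

theorem integral_dotProduct (hμ : IsUniformOnOrthSphere μ v) (a : ι → ℝ) :
    ∫ s, a ⬝ᵥ s ∂μ = 0 := by
  -- the reflection `-householder v` fixes `v` and negates every `s ⊥ v`
  have hO : (-householder v)ᵀ * -householder v = 1 := by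
    rw [transpose_neg, neg_mul_neg, transpose_householder_mul_self]
  have hOv : -householder v *ᵥ v = v := by
    rw [neg_mulVec, householder_mulVec_self, neg_neg]
  have h := hμ.integral_comp_mulVec hO hOv (f := fun s => a ⬝ᵥ s)
    (continuous_const.dotProduct continuous_id)
  have hneg : ∀ᵐ s ∂μ, a ⬝ᵥ (-householder v *ᵥ s) = -(a ⬝ᵥ s) := by
    filter_upwards [hμ.ae_dotProduct_eq_zero] with s hs
    rw [neg_mulVec, householder_mulVec_of_dotProduct_eq_zero (by rwa [dotProduct_comm]),
      dotProduct_neg]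
  rw [integral_congr_ae hneg, integral_neg] at h
  linarith

theorem ae_abs_dotProduct_le (hμ : IsUniformOnOrthSphere μ v) (a : ι → ℝ) :
    ∀ᵐ s ∂μ, ‖a ⬝ᵥ s‖ ≤ √(a ⬝ᵥ a) := by
  filter_upwards [hμ.ae_dotProduct_self] with s hs
  exact Real.abs_le_sqrt (by simpa [hs] using dotProduct_sq_le_dotProduct_self_mul a s)

theorem integrable_dotProduct [IsFiniteMeasure μ] (hμ : IsUniformOnOrthSphere μ v)
    (a : ι → ℝ) : Integrable (fun s => a ⬝ᵥ s) μ :=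
  .of_bound (continuous_const.dotProduct continuous_id).aestronglyMeasurable _
    (hμ.ae_abs_dotProduct_le a)

theorem integrable_dotProduct_mul [IsFiniteMeasure μ] (hμ : IsUniformOnOrthSphere μ v)
    (a b : ι → ℝ) : Integrable (fun s => (a ⬝ᵥ s) * (b ⬝ᵥ s)) μ :=
  (hμ.integrable_dotProduct b).bdd_mul
    (continuous_const.dotProduct continuous_id).aestronglyMeasurable (hμ.ae_abs_dotProduct_le a)

theorem integrable_sq_dotProduct [IsFiniteMeasure μ] (hμ : IsUniformOnOrthSphere μ v)
    (a : ι → ℝ) : Integrable (fun s => (a ⬝ᵥ s) ^ 2) μ := by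
  simpa only [sq] using hμ.integrable_dotProduct_mul a a

theorem integral_sq_dotProduct_eq (hμ : IsUniformOnOrthSphere μ v) {x y : ι → ℝ}
    (hx : x ⬝ᵥ v = 0) (hy : y ⬝ᵥ v = 0) (hxy : x ⬝ᵥ x = y ⬝ᵥ y) :
    ∫ s, (x ⬝ᵥ s) ^ 2 ∂μ = ∫ s, (y ⬝ᵥ s) ^ 2 ∂μ := by
  have hOv : householder (x - y) *ᵥ v = v :=
    householder_mulVec_of_dotProduct_eq_zero (by rw [sub_dotProduct, hx, hy, sub_zero])
  rw [← hμ.integral_comp_mulVec (transpose_householder_mul_self _) hOv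
    (f := fun s => (x ⬝ᵥ s) ^ 2) ((continuous_const.dotProduct continuous_id).pow 2)]
  congr with s
  rw [dotProduct_mulVec, ← mulVec_transpose, householder_transpose, householder_sub_mulVec hxy]

theorem integral_sq_dotProduct_mul_comm (hμ : IsUniformOnOrthSphere μ v) {x y : ι → ℝ}
    (hx : x ⬝ᵥ v = 0) (hy : y ⬝ᵥ v = 0) :
    (∫ s, (x ⬝ᵥ s) ^ 2 ∂μ) * (y ⬝ᵥ y) = (∫ s, (y ⬝ᵥ s) ^ 2 ∂μ) * (x ⬝ᵥ x) := by
  have hxx := Real.sq_sqrt (dotProduct_self_star_nonneg x)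
  have hyy := Real.sq_sqrt (dotProduct_self_star_nonneg y)
  simp only [star_trivial] at hxx hyy
  -- rescale `x` and `y` to a common length
  have h := hμ.integral_sq_dotProduct_eq (x := √(y ⬝ᵥ y) • x) (y := √(x ⬝ᵥ x) • y)
    (by rw [smul_dotProduct, hx, smul_zero]) (by rw [smul_dotProduct, hy, smul_zero])
    (by simp only [smul_dotProduct, dotProduct_smul, smul_eq_mul, ← mul_assoc, ← sq, hxx, hyy]
        ring)
  simpa only [smul_dotProduct, smul_eq_mul, mul_pow, integral_const_mul, hxx, hyy, mul_comm]
    using h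

theorem sum_integral_sq_apply [IsProbabilityMeasure μ] (hμ : IsUniformOnOrthSphere μ v) :
    ∑ j, ∫ s, (Pi.single j 1 ⬝ᵥ s) ^ 2 ∂μ = 1 := by
  rw [← integral_finsetSum _ fun j _ => hμ.integrable_sq_dotProduct _]
  have h : ∀ᵐ s ∂μ, ∑ j, (Pi.single j 1 ⬝ᵥ s) ^ 2 = 1 := by
    filter_upwards [hμ.ae_dotProduct_self] with s hs
    simp only [single_dotProduct, one_mul, sq]
    exact hs
  rw [integral_congr_ae h, integral_const, probReal_univ, one_smul]

theorem integral_sq_sub_smul (hμ : IsUniformOnOrthSphere μ v) (a : ι → ℝ) (c : ℝ) :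
    ∫ s, ((a - c • v) ⬝ᵥ s) ^ 2 ∂μ = ∫ s, (a ⬝ᵥ s) ^ 2 ∂μ := by
  refine integral_congr_ae ?_
  filter_upwards [hμ.ae_dotProduct_eq_zero] with s hs
  rw [sub_dotProduct, smul_dotProduct, dotProduct_comm v, hs, smul_zero, sub_zero]

/-- The second moment, through the orthogonal projection `P a = a - (a ⬝ᵥ v / v ⬝ᵥ v) • v`
onto `v⊥`: it depends only on `‖P a‖`, and summing over the basis gives `tr P = card ι - 1`. -/
theorem card_sub_one_mul_integral_sq [IsProbabilityMeasure μ]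
    (hμ : IsUniformOnOrthSphere μ v) (hv : v ≠ 0) (a : ι → ℝ) :
    (Fintype.card ι - 1 : ℝ) * ∫ s, (a ⬝ᵥ s) ^ 2 ∂μ = a ⬝ᵥ a - (a ⬝ᵥ v) ^ 2 / (v ⬝ᵥ v) := by
  have hvv : v ⬝ᵥ v ≠ 0 := by rwa [Ne, dotProduct_self_eq_zero]
  set P : (ι → ℝ) → ι → ℝ := fun x => x - (x ⬝ᵥ v / (v ⬝ᵥ v)) • v
  have hP : ∀ x, P x ⬝ᵥ v = 0 := fun x => by
    simp only [P, sub_dotProduct, smul_dotProduct, smul_eq_mul, div_mul_cancel₀ _ hvv, sub_self]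
  have hPP : ∀ x, P x ⬝ᵥ P x = x ⬝ᵥ x - (x ⬝ᵥ v) ^ 2 / (v ⬝ᵥ v) := fun x => by
    simp only [P, sub_dotProduct, dotProduct_sub, smul_dotProduct, dotProduct_smul, smul_eq_mul,
      dotProduct_comm v x]
    field_simp
    ring
  have htrace : ∑ j, P (Pi.single j 1) ⬝ᵥ P (Pi.single j 1) = Fintype.card ι - 1 := by
    simp only [hPP, single_dotProduct, dotProduct_single, Pi.single_eq_same, one_mul, mul_one,
      Finset.sum_sub_distrib, ← Finset.sum_div, sq]
    rw [Finset.sum_const, Finset.card_univ, nsmul_one]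
    exact congrArg _ (div_self hvv)
  calc (Fintype.card ι - 1 : ℝ) * ∫ s, (a ⬝ᵥ s) ^ 2 ∂μ
      = ∑ j, (∫ s, (P a ⬝ᵥ s) ^ 2 ∂μ) * (P (Pi.single j 1) ⬝ᵥ P (Pi.single j 1)) := by
        rw [← Finset.mul_sum, htrace, hμ.integral_sq_sub_smul, mul_comm]
    _ = ∑ j, (∫ s, (P (Pi.single j 1) ⬝ᵥ s) ^ 2 ∂μ) * (P a ⬝ᵥ P a) :=
        Finset.sum_congr rfl fun j _ => hμ.integral_sq_dotProduct_mul_comm (hP a) (hP _)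
    _ = a ⬝ᵥ a - (a ⬝ᵥ v) ^ 2 / (v ⬝ᵥ v) := by
        simp only [P, hμ.integral_sq_sub_smul, ← Finset.sum_mul, hμ.sum_integral_sq_apply, one_mul]
        exact hPP a

theorem card_sub_one_mul_integral_dotProduct_mul [IsProbabilityMeasure μ]
    (hμ : IsUniformOnOrthSphere μ v) (hv : v ≠ 0) (a b : ι → ℝ) :
    (Fintype.card ι - 1 : ℝ) * ∫ s, (a ⬝ᵥ s) * (b ⬝ᵥ s) ∂μ
      = a ⬝ᵥ b - (a ⬝ᵥ v) * (b ⬝ᵥ v) / (v ⬝ᵥ v) := by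
  have hpolar : ∫ s, (a ⬝ᵥ s) * (b ⬝ᵥ s) ∂μ
      = (∫ s, ((a + b) ⬝ᵥ s) ^ 2 ∂μ - ∫ s, (a ⬝ᵥ s) ^ 2 ∂μ - ∫ s, (b ⬝ᵥ s) ^ 2 ∂μ) / 2 := by
    rw [← integral_sub (hμ.integrable_sq_dotProduct _) (hμ.integrable_sq_dotProduct _),
      ← integral_sub (by exact (hμ.integrable_sq_dotProduct _).sub (hμ.integrable_sq_dotProduct _))
        (hμ.integrable_sq_dotProduct _), ← integral_div]
    congr with s
    rw [add_dotProduct]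
    ring
  rw [hpolar, mul_div_assoc', mul_sub, mul_sub, hμ.card_sub_one_mul_integral_sq hv,
    hμ.card_sub_one_mul_integral_sq hv, hμ.card_sub_one_mul_integral_sq hv]
  simp only [add_dotProduct, dotProduct_add, dotProduct_comm b a]
  ring

theorem card_sub_one_mul_integral_dotProduct_mul_mulVec_apply [IsProbabilityMeasure μ]
    (hμ : IsUniformOnOrthSphere μ v) (hv : v ≠ 0) (A B : Matrix ι ι ℝ) (w l : ι → ℝ) (i : ι) :
    (Fintype.card ι - 1 : ℝ) * ∫ s, ((w + A *ᵥ s) ⬝ᵥ l) * (B *ᵥ s) i ∂μ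
      = (Aᵀ *ᵥ l) ⬝ᵥ B i - ((Aᵀ *ᵥ l) ⬝ᵥ v) * (B i ⬝ᵥ v) / (v ⬝ᵥ v) := by
  have hsplit : ∀ s, ((w + A *ᵥ s) ⬝ᵥ l) * (B *ᵥ s) i
      = (w ⬝ᵥ l) * (B i ⬝ᵥ s) + ((Aᵀ *ᵥ l) ⬝ᵥ s) * (B i ⬝ᵥ s) := fun s => by
    rw [add_dotProduct, dotProduct_comm (A *ᵥ s), dotProduct_mulVec, mulVec_transpose, add_mul]
    rfl
  simp only [hsplit]
  rw [integral_add ((hμ.integrable_dotProduct _).const_mul _) (hμ.integrable_dotProduct_mul _ _),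
    integral_const_mul, hμ.integral_dotProduct, mul_zero, zero_add,
    hμ.card_sub_one_mul_integral_dotProduct_mul hv]

end IsUniformOnOrthSphere

end UniformOnOrthSphere

theorem lifted_estimator_unbiased_general (d : ℕ)
    (H R : Matrix (Fin (d + 1)) (Fin (d + 1)) ℝ)
    (hR : R.PosDef) (hRsq : R * R = H)
    (wp : Fin (d + 1) → ℝ) (ℓ : Fin d → ℝ)
    (lp : Fin (d + 1) → ℝ) (hlp : lp = Fin.snoc ℓ 0)
    (e : Fin (d + 1) → ℝ) (he : e = Pi.single (Fin.last d) 1)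
    (μs : Measure (Fin (d + 1) → ℝ)) [IsProbabilityMeasure μs]
    -- support: unit sphere of the hyperplane orthogonal to H^{-1/2} e_{d+1}
    (hsupp : ∀ᵐ s ∂μs, dotp s s = 1 ∧ dotp s (R⁻¹.mulVec e) = 0)
    -- uniformity: invariance under all orthogonal maps fixing H^{-1/2} e_{d+1}
    (hinv : ∀ O : Matrix (Fin (d + 1)) (Fin (d + 1)) ℝ, Oᵀ * O = 1 →
      O.mulVec (R⁻¹.mulVec e) = R⁻¹.mulVec e → Measure.map O.mulVec μs = μs) :
    (∀ i : Fin d,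
      ∫ s, (d : ℝ) * dotp (wp + R⁻¹.mulVec s) lp * (R.mulVec s) i.castSucc ∂μs
        = ℓ i) ∧
    (∀ i : Fin (d + 1),
      ∫ s, (d : ℝ) * dotp (wp + R⁻¹.mulVec s) lp * (R.mulVec s) i ∂μs
        = lp i - (if i = Fin.last d then (H⁻¹.mulVec lp) (Fin.last d) else 0)
            / dotp (R⁻¹.mulVec e) (R⁻¹.mulVec e)) := by
  have hRR : R * R⁻¹ = 1 := mul_nonsing_inv R (isUnit_iff_ne_zero.mpr hR.det_pos.ne')
  have hRinvT : R⁻¹ᵀ = R⁻¹ := by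
    rw [transpose_nonsing_inv, ← conjTranspose_eq_transpose_of_trivial, hR.isHermitian.eq]
  set v := R⁻¹ *ᵥ e
  have hRv : ∀ i, R i ⬝ᵥ v = e i :=
    congrFun (by rw [mulVec_mulVec, hRR, one_mulVec] : R *ᵥ v = e)
  have hRp : ∀ i, R i ⬝ᵥ (R⁻¹ *ᵥ lp) = lp i :=
    congrFun (by rw [mulVec_mulVec, hRR, one_mulVec] : R *ᵥ (R⁻¹ *ᵥ lp) = lp)
  have hv : v ≠ 0 := fun h => by simpa [he, h] using hRv (Fin.last d)
  have hpv : (R⁻¹ *ᵥ lp) ⬝ᵥ v = (H⁻¹ *ᵥ lp) (Fin.last d) := by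
    rw [dotProduct_mulVec, ← mulVec_transpose, hRinvT, mulVec_mulVec, ← Matrix.mul_inv_rev, hRsq,
      he, dotProduct_single_one]
  have hμ : IsUniformOnOrthSphere μs v :=
    ⟨hsupp.mono fun _ h => h.1, hsupp.mono fun _ h => h.2, hinv⟩
  have hcoord : ∀ i : Fin (d + 1),
      ∫ s, (d : ℝ) * dotp (wp + R⁻¹ *ᵥ s) lp * (R *ᵥ s) i ∂μs
        = lp i - (if i = Fin.last d then (H⁻¹ *ᵥ lp) (Fin.last d) else 0) / dotp v v := by
    intro i
    have key := hμ.card_sub_one_mul_integral_dotProduct_mul_mulVec_apply hv R⁻¹ R wp lp i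
    rw [Fintype.card_fin, Nat.cast_add_one, add_sub_cancel_right, hRinvT, dotProduct_comm _ (R i),
      hpv, hRp, hRv, he, Pi.single_apply, mul_ite, mul_one, mul_zero] at key
    simp only [mul_assoc]
    rw [integral_const_mul]
    exact key
  refine ⟨fun i => ?_, hcoord⟩
  rw [hcoord, if_neg (Fin.castSucc_lt_last i).ne, hlp, Fin.snoc_castSucc, zero_div, sub_zero]

/-- **Unbiasedness of the lifted linear-bandit estimator.**
`H` is symmetric positive definite with symmetric positive definite square root `R`
(`R * R = H`, so `H^{1/2} = R` and `H^{-1/2} = R⁻¹`); `s` is sampled uniformly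
(rotation-invariantly) from the unit sphere of the orthogonal complement of
`H^{-1/2} e_{d+1}`; `w̃⁺ = w⁺ + H^{-1/2} s` and `ℓ̂⁺ = d ⟨w̃⁺, ℓ⁺⟩ H^{1/2} s` with
`ℓ⁺ = (ℓ, 0)`.  Then `E[ℓ̂⁺ i] = ℓ i` for `i ∈ {1,…,d}`, and more precisely
`E[ℓ̂⁺] = ℓ⁺ − e_{d+1} e_{d+1}ᵀ H⁻¹ ℓ⁺ / ‖H^{-1/2} e_{d+1}‖₂²`. -/
theorem lifted_estimator_unbiased (d : ℕ) (hd : 1 ≤ d)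
    (H R : Matrix (Fin (d + 1)) (Fin (d + 1)) ℝ)
    (hH : H.PosDef) (hHsymm : H.IsSymm)
    (hR : R.PosDef) (hRsymm : R.IsSymm) (hRsq : R * R = H)
    (wp : Fin (d + 1) → ℝ) (ℓ : Fin d → ℝ)
    (lp : Fin (d + 1) → ℝ) (hlp : lp = Fin.snoc ℓ 0)
    (e : Fin (d + 1) → ℝ) (he : e = Pi.single (Fin.last d) 1)
    (μs : Measure (Fin (d + 1) → ℝ)) [IsProbabilityMeasure μs]
    -- support: unit sphere of the hyperplane orthogonal to H^{-1/2} e_{d+1}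
    (hsupp : ∀ᵐ s ∂μs, dotp s s = 1 ∧ dotp s (R⁻¹.mulVec e) = 0)
    -- uniformity: invariance under all orthogonal maps fixing H^{-1/2} e_{d+1}
    (hinv : ∀ O : Matrix (Fin (d + 1)) (Fin (d + 1)) ℝ, Oᵀ * O = 1 →
      O.mulVec (R⁻¹.mulVec e) = R⁻¹.mulVec e → Measure.map O.mulVec μs = μs) :
    (∀ i : Fin d,
      ∫ s, (d : ℝ) * dotp (wp + R⁻¹.mulVec s) lp * (R.mulVec s) i.castSucc ∂μs
        = ℓ i) ∧
    (∀ i : Fin (d + 1),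
      ∫ s, (d : ℝ) * dotp (wp + R⁻¹.mulVec s) lp * (R.mulVec s) i ∂μs
        = lp i - (if i = Fin.last d then (H⁻¹.mulVec lp) (Fin.last d) else 0)
            / dotp (R⁻¹.mulVec e) (R⁻¹.mulVec e)) :=
  lifted_estimator_unbiased_general d H R hR hRsq wp ℓ lp hlp e he μs hsupp hinv
end

section
/- Determinant-doubling step: Let A and H be symmetric positive semidefinite (d+1)×(d+1) real matrices with A positive definite, and suppose there exists a vector p ∈ R^{d+1} with pᵀHp ≥ pᵀAp. Then det(A + H) ≥ 2·det(A). -/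
/-!
Write `A = Bᵀ B` with `B` invertible. Then `A + H = Bᵀ (1 + M) B` with `M = B⁻ᵀ H B⁻¹` positive
semidefinite, so `det (A + H) = det A * ∏ᵢ (1 + λᵢ)` over the eigenvalues `λᵢ ≥ 0` of `M`.
For `q = B p` the hypothesis reads `qᵀ q ≤ qᵀ M q`, so the largest eigenvalue of `M` is at
least `1` and the product is at least `2`.
-/

open Matrix Finset
open scoped MatrixOrder

namespace Matrix

variable {n : Type*} [Fintype n]

lemma transpose_mul_mul_mulVec_dotProduct {m R : Type*} [Fintype m] [CommSemiring R]
    (B : Matrix m n R) (M : Matrix m m R) (p : n → R) :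
    (Bᵀ * M * B) *ᵥ p ⬝ᵥ p = M *ᵥ (B *ᵥ p) ⬝ᵥ (B *ᵥ p) := by
  rw [← mulVec_mulVec, ← mulVec_mulVec, dotProduct_comm, dotProduct_mulVec, vecMul_transpose,
    dotProduct_comm]

variable [DecidableEq n]

lemma IsHermitian.det_cfc {𝕜 : Type*} [RCLike 𝕜] {A : Matrix n n 𝕜} (hA : A.IsHermitian)
    (f : ℝ → ℝ) : (cfc f A).det = ∏ i, (f (hA.eigenvalues i) : 𝕜) := by
  simp [hA.cfc_eq, IsHermitian.cfc, -Unitary.conjStarAlgAut_apply]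

lemma IsHermitian.det_one_add {𝕜 : Type*} [RCLike 𝕜] {A : Matrix n n 𝕜} (hA : A.IsHermitian) :
    (1 + A).det = ∏ i, (1 + hA.eigenvalues i : 𝕜) := by
  have h : cfc (fun x : ℝ ↦ 1 + x) A = 1 + A := by
    rw [cfc_add .., cfc_const_one .., cfc_id' ..]
  rw [← h, hA.det_cfc]
  push_cast
  rfl

lemma IsHermitian.mulVec_dotProduct_le {A : Matrix n n ℝ} (hA : A.IsHermitian) {c : ℝ}
    (hc : ∀ i, hA.eigenvalues i ≤ c) (x : n → ℝ) : A *ᵥ x ⬝ᵥ x ≤ c * (x ⬝ᵥ x) := by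
  have hle : A ≤ algebraMap ℝ _ c := by
    refine le_algebraMap_of_spectrum_le ?_ hA.isSelfAdjoint
    rw [hA.spectrum_real_eq_range_eigenvalues]
    rintro _ ⟨i, rfl⟩
    exact hc i
  have h := (le_iff.mp hle).dotProduct_mulVec_nonneg x
  rwa [Algebra.algebraMap_eq_smul_one, sub_mulVec, smul_mulVec, one_mulVec, star_trivial,
    dotProduct_sub, dotProduct_smul, dotProduct_comm x (A *ᵥ x), smul_eq_mul, sub_nonneg] at h

lemma PosSemidef.two_le_det_one_add {M : Matrix n n ℝ} (hM : M.PosSemidef) {q : n → ℝ}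
    (hq : q ≠ 0) (hqM : q ⬝ᵥ q ≤ M *ᵥ q ⬝ᵥ q) : 2 ≤ (1 + M).det := by
  have : Nonempty n := let ⟨i, _⟩ := Function.ne_iff.mp hq; ⟨i⟩
  obtain ⟨i, hi⟩ := Finite.exists_max hM.1.eigenvalues
  have hq_pos : 0 < q ⬝ᵥ q := by simpa using dotProduct_self_star_pos_iff.mpr hq
  have hmax : 1 ≤ hM.1.eigenvalues i :=
    le_of_mul_le_mul_right (by rw [one_mul]; exact hqM.trans (hM.1.mulVec_dotProduct_le hi q))
      hq_pos
  have h0 : ∀ j, 0 ≤ hM.1.eigenvalues j := hM.eigenvalues_nonneg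
  calc (2 : ℝ) ≤ ∏ j ∈ {i}, (1 + hM.1.eigenvalues j) := by rw [prod_singleton]; linarith
    _ ≤ ∏ j, (1 + hM.1.eigenvalues j) :=
      prod_le_prod_of_subset_of_one_le (subset_univ _) (fun j _ ↦ by linarith [h0 j])
        (fun j _ _ ↦ by linarith [h0 j])
    _ = (1 + M).det := hM.1.det_one_add.symm

lemma PosDef.exists_isUnit_eq_transpose_mul_self {A : Matrix n n ℝ} (hA : A.PosDef) :
    ∃ B : Matrix n n ℝ, IsUnit B ∧ A = Bᵀ * B := by
  obtain ⟨B, hB⟩ := CStarAlgebra.nonneg_iff_eq_star_mul_self.mp hA.posSemidef.nonneg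
  rw [star_eq_conjTranspose, conjTranspose_eq_transpose_of_trivial] at hB
  exact ⟨B, isUnit_of_mul_isUnit_right (hB ▸ hA.isUnit), hB⟩

end Matrix

/-- **Determinant-doubling step.**
Let `A` and `H` be symmetric positive semidefinite `(d+1)×(d+1)` real matrices with `A`
positive definite, and suppose there exists a (nonzero) vector `p` with
`pᵀ H p ≥ pᵀ A p`.  Then `det (A + H) ≥ 2 det A`. -/
theorem det_doubling (d : ℕ) (A H : Matrix (Fin (d + 1)) (Fin (d + 1)) ℝ)
    (hA : A.PosDef) (hH : H.PosSemidef)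
    (hp : ∃ p : Fin (d + 1) → ℝ, p ≠ 0 ∧ A.mulVec p ⬝ᵥ p ≤ H.mulVec p ⬝ᵥ p) :
    2 * A.det ≤ (A + H).det := by
  obtain ⟨p, hp0, hp⟩ := hp
  obtain ⟨B, hB, rfl⟩ := hA.exists_isUnit_eq_transpose_mul_self
  have hBdet : IsUnit B.det := (isUnit_iff_isUnit_det B).mp hB
  set M := B⁻¹ᵀ * H * B⁻¹
  have hHM : H = Bᵀ * M * B := by
    rw [← Matrix.mul_assoc, ← Matrix.mul_assoc, ← transpose_mul, nonsing_inv_mul _ hBdet,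
      transpose_one, Matrix.one_mul, Matrix.mul_assoc, nonsing_inv_mul _ hBdet, Matrix.mul_one]
  have hM : M.PosSemidef := by
    rwa [← hB.posSemidef_star_left_conjugate_iff, star_eq_conjTranspose,
      conjTranspose_eq_transpose_of_trivial, ← hHM]
  have hBp : B *ᵥ p ≠ 0 := fun h ↦
    hp0 (by simpa [nonsing_inv_mul _ hBdet] using congrArg (B⁻¹ *ᵥ ·) h)
  have hq : B *ᵥ p ⬝ᵥ B *ᵥ p ≤ M *ᵥ (B *ᵥ p) ⬝ᵥ B *ᵥ p := by
    rwa [← Matrix.mul_one Bᵀ, hHM, transpose_mul_mul_mulVec_dotProduct,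
      transpose_mul_mul_mulVec_dotProduct, one_mulVec] at hp
  have h2 : 2 ≤ (1 + M).det := hM.two_le_det_one_add hBp hq
  have hsum : Bᵀ * B + H = Bᵀ * (1 + M) * B := by
    rw [Matrix.mul_add, Matrix.add_mul, Matrix.mul_one, hHM]
  rw [hsum, det_mul, det_mul, det_mul]
  nlinarith [hA.det_pos, det_mul Bᵀ B]
end
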